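/- With the setup of the nonempty-subset distribution (probability of D ⊆ {1,…,n}, D ≠ ∅, proportional to ∏_{i∈D}(1−q_i)·∏_{j∉D} q_j, with 0 ≤ q_i < 1), the sequential marginals are: for a partial assignment c₁,…,c_i ∈ {0,1} with c₁+⋯+c_i ≥ 1, Pr[σ_j = c_j for all j ≤ i] = (∏_{j=1}^i f_j(c_j)) / (1 − ∏_{j=1}^n q_j); and if c₁+⋯+c_i = 0, Pr[σ_j = c_j for all j ≤ i] = (1 − ∏_{k=i+1}^n q_k)·(∏_{j=1}^i f_j(c_j)) / (1 − ∏_{j=1}^n q_j), where f_j(0) = q_j and f_j(1) = 1 − q_j. -/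
import Mathlib


attribute [local instance] Classical.propDecidable

open Finset in
private lemma aux7 {n : ℕ} (q : Fin n → ℝ) (A S : Finset (Fin n)) (hSA : S ⊆ A) :
    ∑ D ∈ univ.powerset.filter (fun D => D ∩ A = S),
      (∏ k ∈ D, (1 - q k)) * ∏ k ∈ Dᶜ, q k
    = (∏ j ∈ S, (1 - q j)) * ∏ j ∈ A \ S, q j := by
  have hbij : ∑ D ∈ univ.powerset.filter (fun D => D ∩ A = S),
      (∏ k ∈ D, (1 - q k)) * ∏ k ∈ Dᶜ, q k
    = ∑ T ∈ Aᶜ.powerset,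
      ((∏ j ∈ S, (1 - q j)) * ∏ j ∈ A \ S, q j) *
        ((∏ k ∈ T, (1 - q k)) * ∏ k ∈ Aᶜ \ T, q k) := by
    refine Finset.sum_bij' (fun D _ => D \ A) (fun T _ => S ∪ T) ?_ ?_ ?_ ?_ ?_
    · intro D hD
      simp only [mem_powerset]
      intro x hx
      simp only [mem_sdiff] at hx
      simp [hx.2]
    · intro T hT
      simp only [mem_powerset] at hT
      simp only [mem_filter, mem_powerset]
      refine ⟨subset_univ _, ?_⟩
      ext x
      have hTx : x ∈ T → x ∉ A := fun h => by simpa using hT h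
      simp only [mem_inter, mem_union]
      constructor
      · rintro ⟨hx1 | hx1, hx2⟩
        · exact hx1
        · exact absurd hx2 (hTx hx1)
      · intro hx; exact ⟨Or.inl hx, hSA hx⟩
    · intro D hD
      simp only [mem_filter, mem_powerset] at hD
      ext x
      simp only [mem_union, mem_sdiff]
      constructor
      · rintro (hx | ⟨hx, _⟩)
        · have hxDA : x ∈ D ∩ A := hD.2.symm ▸ hx
          exact (mem_inter.mp hxDA).1
        · exact hx
      · intro hx
        by_cases hxA : x ∈ A
        · exact Or.inl (hD.2 ▸ mem_inter.mpr ⟨hx, hxA⟩)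
        · exact Or.inr ⟨hx, hxA⟩
    · intro T hT
      simp only [mem_powerset] at hT
      ext x
      have hTx : x ∈ T → x ∉ A := fun h => by simpa using hT h
      simp only [mem_sdiff, mem_union]
      constructor
      · rintro ⟨hx | hx, hxA⟩
        · exact absurd (hSA hx) hxA
        · exact hx
      · intro hx
        exact ⟨Or.inr hx, hTx hx⟩
    · intro D hD
      simp only [mem_filter, mem_powerset] at hD
      have hD2 : D = S ∪ (D \ A) := by
        ext x
        simp only [mem_union, mem_sdiff]
        constructor
        · intro hx
          by_cases hxA : x ∈ A
          · exact Or.inl (hD.2 ▸ mem_inter.mpr ⟨hx, hxA⟩)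
          · exact Or.inr ⟨hx, hxA⟩
        · rintro (hx | ⟨hx, _⟩)
          · have hxDA : x ∈ D ∩ A := hD.2.symm ▸ hx
            exact (mem_inter.mp hxDA).1
          · exact hx
      have hDc : Dᶜ = (A \ S) ∪ (Aᶜ \ (D \ A)) := by
        ext x
        simp only [mem_compl, mem_union, mem_sdiff, Finset.mem_compl]
        constructor
        · intro hx
          by_cases hxA : x ∈ A
          · refine Or.inl ⟨hxA, fun hxS => hx ?_⟩
            have hxDA : x ∈ D ∩ A := hD.2.symm ▸ hxS
            exact (mem_inter.mp hxDA).1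
          · exact Or.inr ⟨hxA, fun h => hx h.1⟩
        · rintro (⟨hxA, hxS⟩ | ⟨hxA, hxT⟩)
          · intro hxD
            exact hxS (hD.2 ▸ mem_inter.mpr ⟨hxD, hxA⟩)
          · intro hxD
            exact hxT ⟨hxD, hxA⟩
      have hdisj1 : Disjoint S (D \ A) := by
        rw [Finset.disjoint_left]
        intro x hxS hxT
        exact (mem_sdiff.mp hxT).2 (hSA hxS)
      have hdisj2 : Disjoint (A \ S) (Aᶜ \ (D \ A)) := by
        rw [Finset.disjoint_left]
        intro x hx1 hx2
        have : x ∉ A := by simpa using (mem_sdiff.mp hx2).1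
        exact this (mem_sdiff.mp hx1).1
      have h1 : (∏ k ∈ D, (1 - q k))
          = (∏ k ∈ S, (1 - q k)) * ∏ k ∈ D \ A, (1 - q k) := by
        conv_lhs => rw [hD2]
        rw [prod_union hdisj1]
      have h2 : (∏ k ∈ Dᶜ, q k)
          = (∏ k ∈ A \ S, q k) * ∏ k ∈ Aᶜ \ (D \ A), q k := by
        rw [hDc, prod_union hdisj2]
      rw [h1, h2]; ring
  rw [hbij, ← Finset.mul_sum, ← Finset.prod_add]
  simp

open Finset in
/-- Sequential marginals of the nonempty-subset distribution
(probability of `D ≠ ∅` proportional to `∏_{i∈D}(1-qᵢ)·∏_{j∉D}qⱼ`): for a partial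
assignment `c₁,…,cᵢ`, if some `cⱼ = 1` (`j ≤ i`) then
`Pr[σⱼ = cⱼ ∀ j ≤ i] = (∏_{j≤i} fⱼ(cⱼ))/(1 - ∏ₖ qₖ)`, and if all `cⱼ = 0` then
`Pr[σⱼ = cⱼ ∀ j ≤ i] = (1 - ∏_{k>i} qₖ)·(∏_{j≤i} fⱼ(cⱼ))/(1 - ∏ₖ qₖ)`,
where `fⱼ(0) = qⱼ`, `fⱼ(1) = 1 - qⱼ`. -/
theorem stmt7 (n : ℕ) (hn : 1 ≤ n) (q : Fin n → ℝ) (hq : ∀ k, 0 ≤ q k ∧ q k < 1)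
    (i : ℕ) (hi : i ≤ n) (c : Fin n → Bool) :
    ((∃ j : Fin n, (j : ℕ) < i ∧ c j = true) →
      (∑ D ∈ Finset.univ.powerset.filter
          (fun D : Finset (Fin n) =>
            D.Nonempty ∧ ∀ j : Fin n, (j : ℕ) < i → (j ∈ D ↔ c j = true)),
        (∏ k ∈ D, (1 - q k)) * ∏ k ∈ Dᶜ, q k) / (1 - ∏ k, q k) =
      (∏ j ∈ Finset.univ.filter (fun j : Fin n => (j : ℕ) < i),
          (if c j then 1 - q j else q j)) / (1 - ∏ k, q k)) ∧
    ((∀ j : Fin n, (j : ℕ) < i → c j = false) →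
      (∑ D ∈ Finset.univ.powerset.filter
          (fun D : Finset (Fin n) =>
            D.Nonempty ∧ ∀ j : Fin n, (j : ℕ) < i → (j ∈ D ↔ c j = true)),
        (∏ k ∈ D, (1 - q k)) * ∏ k ∈ Dᶜ, q k) / (1 - ∏ k, q k) =
      ((1 - ∏ k ∈ Finset.univ.filter (fun k : Fin n => i ≤ (k : ℕ)), q k) *
        ∏ j ∈ Finset.univ.filter (fun j : Fin n => (j : ℕ) < i),
          (if c j then 1 - q j else q j)) / (1 - ∏ k, q k)) := by
  set A : Finset (Fin n) := univ.filter (fun j : Fin n => (j : ℕ) < i) with hA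
  have hmemA : ∀ j : Fin n, j ∈ A ↔ (j : ℕ) < i := by
    intro j; simp [hA]
  constructor
  · rintro ⟨j₀, hj₀i, hj₀c⟩
    set S : Finset (Fin n) := A.filter (fun j => c j = true) with hS
    have hSA : S ⊆ A := filter_subset _ _
    have hmemS : ∀ j : Fin n, j ∈ S ↔ ((j : ℕ) < i ∧ c j = true) := by
      intro j; simp [hS, hmemA]
    have hset : Finset.univ.powerset.filter
          (fun D : Finset (Fin n) =>
            D.Nonempty ∧ ∀ j : Fin n, (j : ℕ) < i → (j ∈ D ↔ c j = true))
        = Finset.univ.powerset.filter (fun D => D ∩ A = S) := by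
      ext D
      simp only [mem_filter, mem_powerset, subset_univ, true_and]
      constructor
      · rintro ⟨hne, hforall⟩
        ext x
        rw [mem_inter, hmemA, hmemS]
        constructor
        · rintro ⟨hxD, hxi⟩; exact ⟨hxi, (hforall x hxi).1 hxD⟩
        · rintro ⟨hxi, hxc⟩; exact ⟨(hforall x hxi).2 hxc, hxi⟩
      · intro hDS
        constructor
        · refine ⟨j₀, ?_⟩
          have : j₀ ∈ D ∩ A := hDS ▸ (hmemS j₀).2 ⟨hj₀i, hj₀c⟩
          exact (mem_inter.mp this).1
        · intro j hj
          constructor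
          · intro hjD
            have : j ∈ D ∩ A := mem_inter.mpr ⟨hjD, (hmemA j).2 hj⟩
            exact ((hmemS j).1 (hDS ▸ this)).2
          · intro hjc
            have : j ∈ D ∩ A := hDS ▸ (hmemS j).2 ⟨hj, hjc⟩
            exact (mem_inter.mp this).1
    rw [hset, aux7 q A S hSA]
    congr 1
    rw [Finset.prod_ite]
    have h1 : A.filter (fun j => c j = true) = S := rfl
    have h2 : A.filter (fun j => ¬ (c j = true)) = A \ S := by
      rw [hS, Finset.filter_not]
    have h3 : ∏ j ∈ A.filter (fun j => ¬ (c j = true)), q j = ∏ j ∈ A \ S, q j := by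
      rw [h2]
    calc (∏ j ∈ S, (1 - q j)) * ∏ j ∈ A \ S, q j
        = (∏ j ∈ A.filter (fun j => c j = true), (1 - q j)) *
            ∏ j ∈ A.filter (fun j => ¬ (c j = true)), q j := by rw [h1, h3]
      _ = _ := rfl
  · intro h
    have hset : Finset.univ.powerset.filter
          (fun D : Finset (Fin n) =>
            D.Nonempty ∧ ∀ j : Fin n, (j : ℕ) < i → (j ∈ D ↔ c j = true))
        = (Finset.univ.powerset.filter (fun D => D ∩ A = (∅ : Finset (Fin n)))).erase ∅ := by
      ext D
      simp only [mem_erase, mem_filter, mem_powerset, subset_univ, true_and]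
      constructor
      · rintro ⟨hne, hforall⟩
        refine ⟨Finset.nonempty_iff_ne_empty.mp hne, ?_⟩
        rw [Finset.eq_empty_iff_forall_notMem]
        intro x hx
        rcases mem_inter.mp hx with ⟨hxD, hxA⟩
        have hxi := (hmemA x).1 hxA
        have := (hforall x hxi).1 hxD
        rw [h x hxi] at this
        exact Bool.false_ne_true this
      · rintro ⟨hne, hDA⟩
        refine ⟨Finset.nonempty_iff_ne_empty.mpr hne, ?_⟩
        intro j hj
        constructor
        · intro hjD
          have : j ∈ D ∩ A := mem_inter.mpr ⟨hjD, (hmemA j).2 hj⟩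
          rw [hDA] at this
          exact absurd this (Finset.notMem_empty j)
        · intro hjc
          rw [h j hj] at hjc
          exact absurd hjc Bool.false_ne_true
    have hmem0 : (∅ : Finset (Fin n)) ∈
        Finset.univ.powerset.filter (fun D => D ∩ A = (∅ : Finset (Fin n))) := by
      simp
    rw [hset, Finset.sum_erase_eq_sub hmem0, aux7 q A ∅ (Finset.empty_subset A)]
    have hAc : Aᶜ = univ.filter (fun k : Fin n => i ≤ (k : ℕ)) := by
      ext x; simp [hA, Nat.not_lt]
    have hprodA : ∏ j ∈ A, (if c j then 1 - q j else q j) = ∏ j ∈ A, q j := by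
      refine Finset.prod_congr rfl fun j hj => ?_
      rw [h j ((hmemA j).1 hj)]
      simp
    have huniv : (∏ k, q k) = (∏ k ∈ A, q k) * ∏ k ∈ Aᶜ, q k :=
      (Finset.prod_mul_prod_compl A q).symm
    have hw0 : ((∏ k ∈ (∅ : Finset (Fin n)), (1 - q k)) * ∏ k ∈ (∅ : Finset (Fin n))ᶜ, q k)
        = ∏ k, q k := by simp
    rw [hw0, hprodA, ← hAc]
    congr 1
    rw [huniv]
    simp
    ring
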